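/- arXiv:1308.4739 — 6 statements merged into one kernel-verified Lean document; each statement's English description precedes it below -/
import Mathlib

section
/- For every integer k ≥ 1, let n = 2k+1. Then for every integer j with 0 ≤ j ≤ n-1, the alternating sum (-1)^j · Σ_{k1+k2=j, 0 ≤ k1,k2 ≤ k} (2k2+1-2k1) · C(n,2k1) · C(n,2k2+1) equals n · C(n-1,j), where C(a,b) denotes the binomial coefficient. In particular this sum is always positive. -/
/-!
Write `E` and `O` for the even and odd parts of `(1 + X) ^ n`, so that `(1 + X) ^ n = E + O` and
`(1 - X) ^ n = E - O`. The sum is the coefficient of `X ^ (2 * j)` in the Wronskian `E O' - E' O`,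
and substituting `E ± O` gives
`2 (E O' - E' O) = (1 - X) ^ n ((1 + X) ^ n)' - (1 + X) ^ n ((1 - X) ^ n)'`,
which is `2 n (1 - X ^ 2) ^ (n - 1)`.
-/

open Polynomial Finset

theorem Finset.sum_range_two_mul {M : Type*} [AddCommMonoid M] (f : ℕ → M) (N : ℕ) :
    ∑ m ∈ range (2 * N), f m = ∑ a ∈ range N, (f (2 * a) + f (2 * a + 1)) := by
  induction N with
  | zero => simp
  | succ N ih => rw [Nat.mul_succ, sum_range_succ, sum_range_succ, sum_range_succ, ih, add_assoc]

section CommRing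

variable {R : Type*} [CommRing R]

theorem Polynomial.X_mul_derivative_C_mul_X_pow (a : R) (m : ℕ) :
    X * derivative (C a * X ^ m) = C (a * m) * X ^ m := by
  rcases m with _ | m
  · simp
  · rw [derivative_C_mul_X_pow, Nat.add_sub_cancel, mul_left_comm, ← pow_succ']

theorem Polynomial.one_add_C_mul_X_pow_pow (r : R) (d n : ℕ) :
    (1 + C r * X ^ d) ^ n = ∑ m ∈ range (n + 1), C (r ^ m * n.choose m) * X ^ (d * m) := by
  rw [add_comm, add_pow]
  refine sum_congr rfl fun m _ => ?_
  simp only [one_pow, mul_one, mul_pow, ← C_pow, pow_mul, map_mul, map_natCast]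
  ring

theorem Polynomial.coeff_one_add_C_mul_X_pow_pow (r : R) {d : ℕ} (hd : 0 < d) (n j : ℕ) :
    ((1 + C r * X ^ d) ^ n).coeff (d * j) = r ^ j * n.choose j := by
  simp only [one_add_C_mul_X_pow_pow, finsetSum_coeff, coeff_C_mul_X_pow,
    Nat.mul_left_cancel_iff hd, sum_ite_eq, mem_range]
  split_ifs with hj
  · rfl
  · rw [Nat.choose_eq_zero_of_lt (by omega), Nat.cast_zero, mul_zero]

end CommRing

noncomputable def evenChoosePoly (n N : ℕ) : ℤ[X] :=
  ∑ a ∈ range N, C (n.choose (2 * a) : ℤ) * X ^ (2 * a)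

noncomputable def oddChoosePoly (n N : ℕ) : ℤ[X] :=
  ∑ b ∈ range N, C (n.choose (2 * b + 1) : ℤ) * X ^ (2 * b + 1)

theorem one_add_C_mul_X_pow_eq_evenChoosePoly_add {n N : ℕ} (hn : n < 2 * N) {r : ℤ}
    (hr : r ^ 2 = 1) :
    (1 + C r * X) ^ n = evenChoosePoly n N + C r * oddChoosePoly n N := by
  have hsupp : range (n + 1) ⊆ range (2 * N) := range_subset_range.mpr hn
  rw [← pow_one X, one_add_C_mul_X_pow_pow, sum_subset hsupp fun m _ hm => ?_,
    sum_range_two_mul, evenChoosePoly, oddChoosePoly, mul_sum, ← sum_add_distrib]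
  · refine sum_congr rfl fun a _ => ?_
    simp only [one_mul, pow_succ, pow_mul, hr, one_pow, map_mul]
    ring
  · rw [Nat.choose_eq_zero_of_lt (by simpa using hm), Nat.cast_zero, mul_zero, map_zero, zero_mul]

theorem wronskian_evenChoosePoly_oddChoosePoly {n N : ℕ} (hn : n < 2 * N) :
    evenChoosePoly n N * derivative (oddChoosePoly n N) -
        derivative (evenChoosePoly n N) * oddChoosePoly n N =
      C (n : ℤ) * (1 - X ^ 2) ^ (n - 1) := by
  set E := evenChoosePoly n N
  set O := oddChoosePoly n N
  have hP : (1 + X) ^ n = E + O := by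
    simpa using one_add_C_mul_X_pow_eq_evenChoosePoly_add hn (r := 1) (by norm_num)
  have hQ : (1 - X) ^ n = E - O := by
    simpa [sub_eq_add_neg] using
      one_add_C_mul_X_pow_eq_evenChoosePoly_add hn (r := -1) (by norm_num)
  refine mul_left_cancel₀ (two_ne_zero (α := ℤ[X])) ?_
  calc 2 * (E * derivative O - derivative E * O)
      = (E - O) * derivative (E + O) - (E + O) * derivative (E - O) := by
        simp only [derivative_add, derivative_sub]; ring
    _ = (1 - X) ^ n * derivative ((1 + X) ^ n) - (1 + X) ^ n * derivative ((1 - X) ^ n) := by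
        rw [hP, hQ]
    _ = 2 * (C (n : ℤ) * (1 - X ^ 2) ^ (n - 1)) := by
        rcases n with _ | n
        · simp
        · have h : (1 - X ^ 2 : ℤ[X]) = (1 - X) * (1 + X) := by ring
          simp only [derivative_pow, derivative_add, derivative_sub, derivative_one, derivative_X,
            Nat.add_sub_cancel, h, mul_pow]
          push_cast
          ring

-- Multiplying by `X` avoids the truncated exponent `2 * a - 1` in `derivative (X ^ (2 * a))`.
theorem X_mul_wronskian_evenChoosePoly_oddChoosePoly (n N : ℕ) :
    X * (evenChoosePoly n N * derivative (oddChoosePoly n N) -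
        derivative (evenChoosePoly n N) * oddChoosePoly n N) =
      ∑ q ∈ range N ×ˢ range N,
        C ((2 * (q.2 : ℤ) + 1 - 2 * (q.1 : ℤ)) * (n.choose (2 * q.1) : ℤ) *
          (n.choose (2 * q.2 + 1) : ℤ)) * X ^ (2 * (q.1 + q.2) + 1) := by
  have hO : X * derivative (oddChoosePoly n N) =
      ∑ b ∈ range N,
        C ((n.choose (2 * b + 1) : ℤ) * (2 * b + 1 : ℕ)) * X ^ (2 * b + 1) := by
    simp only [oddChoosePoly, derivative_sum, mul_sum, X_mul_derivative_C_mul_X_pow]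
  have hE : X * derivative (evenChoosePoly n N) =
      ∑ a ∈ range N, C ((n.choose (2 * a) : ℤ) * (2 * a : ℕ)) * X ^ (2 * a) := by
    simp only [evenChoosePoly, derivative_sum, mul_sum, X_mul_derivative_C_mul_X_pow]
  rw [mul_sub, mul_left_comm X (evenChoosePoly n N), ← mul_assoc X, hO, hE, evenChoosePoly,
    oddChoosePoly, sum_mul_sum, sum_mul_sum, ← sum_sub_distrib, sum_product]
  refine sum_congr rfl fun a _ => ?_
  rw [← sum_sub_distrib]
  refine sum_congr rfl fun b _ => ?_
  simp only [map_mul, map_sub, map_add, map_natCast, map_ofNat, map_one, Nat.cast_mul,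
    Nat.cast_add, Nat.cast_ofNat, Nat.cast_one]
  ring

theorem sum_choose_even_mul_choose_odd {n N : ℕ} (hn : n < 2 * N) (j : ℕ) :
    ∑ q ∈ (range N ×ˢ range N).filter (fun q => q.1 + q.2 = j),
        (2 * (q.2 : ℤ) + 1 - 2 * (q.1 : ℤ)) * (n.choose (2 * q.1) : ℤ) *
          (n.choose (2 * q.2 + 1) : ℤ) =
      (-1) ^ j * n * ((n - 1).choose j : ℤ) := by
  have hsq : (1 - X ^ 2 : ℤ[X]) = 1 + C (-1) * X ^ 2 := by simp [sub_eq_add_neg]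
  have h := congrArg (coeff · (2 * j + 1)) (X_mul_wronskian_evenChoosePoly_oddChoosePoly n N)
  simp only [coeff_X_mul, wronskian_evenChoosePoly_oddChoosePoly hn, hsq, coeff_C_mul,
    coeff_one_add_C_mul_X_pow_pow (-1 : ℤ) two_pos, finsetSum_coeff, coeff_X_pow, mul_ite,
    mul_one, mul_zero, Nat.succ_inj, Nat.mul_left_cancel_iff two_pos, eq_comm (a := j),
    ← sum_filter] at h
  rw [← h]
  ring

theorem stmt0_general (k : ℕ) (j : ℕ) (hj : j ≤ 2 * k) :
    (-1 : ℤ) ^ j *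
        ∑ q ∈ (Finset.range (k + 1) ×ˢ Finset.range (k + 1)).filter
            (fun q => q.1 + q.2 = j),
          (2 * (q.2 : ℤ) + 1 - 2 * (q.1 : ℤ)) * ((2 * k + 1).choose (2 * q.1) : ℤ) *
            ((2 * k + 1).choose (2 * q.2 + 1) : ℤ)
      = (2 * k + 1) * ((2 * k).choose j : ℤ) ∧
    0 < ((2 * k + 1) : ℤ) * ((2 * k).choose j : ℤ) := by
  refine ⟨?_, by positivity [Nat.choose_pos hj]⟩
  rw [sum_choose_even_mul_choose_odd (by omega), ← mul_assoc, ← mul_assoc, ← pow_add,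
    Even.neg_one_pow ⟨j, rfl⟩, one_mul, Nat.add_sub_cancel]
  push_cast
  ring

/-- Lemma 4.7: the alternating sum `A_j^n` equals `n * C(n-1, j)`, where `n = 2k+1`;
in particular it is positive. -/
theorem stmt0 (k : ℕ) (hk : 1 ≤ k) (j : ℕ) (hj : j ≤ 2 * k) :
    (-1 : ℤ) ^ j *
        ∑ q ∈ (Finset.range (k + 1) ×ˢ Finset.range (k + 1)).filter
            (fun q => q.1 + q.2 = j),
          (2 * (q.2 : ℤ) + 1 - 2 * (q.1 : ℤ)) * ((2 * k + 1).choose (2 * q.1) : ℤ) *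
            ((2 * k + 1).choose (2 * q.2 + 1) : ℤ)
      = (2 * k + 1) * ((2 * k).choose j : ℤ) ∧
    0 < ((2 * k + 1) : ℤ) * ((2 * k).choose j : ℤ) :=
  stmt0_general k j hj
end

section
/- For real β and x ≠ 0, define h_β(x) = (1/4)·((1+βx)^n + (1-βx)^n)·((1+β/x)^n - (1-β/x)^n) where n = 2k+1 is odd. Then the derivative of h_β with respect to x evaluated at x = 1 satisfies h_β'(1) = -n·β·(1-β^2)^{n-1}. -/
/-! With `p = 1 + β`, `q = 1 - β` and `h = A B / 4`, where `A(x) = (1+βx)^n + (1-βx)^n` and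
`B(x) = (1+β/x)^n - (1-β/x)^n`, the product rule gives at `x = 1`
`A'B + AB' = nβ((p^(n-1) - q^(n-1))(p^n - q^n) - (p^n + q^n)(p^(n-1) + q^(n-1)))`.
The pure powers `p^(2n-1)`, `q^(2n-1)` cancel, leaving `-2nβ (pq)^(n-1) (p + q) = -4nβ(1-β²)^(n-1)`. -/

theorem hasDerivAt_one_add_mul_pow_add_one_sub_mul_pow (β : ℝ) (n : ℕ) :
    HasDerivAt (fun x : ℝ => (1 + β * x) ^ (n + 1) + (1 - β * x) ^ (n + 1))
      ((n + 1) * β * ((1 + β) ^ n - (1 - β) ^ n)) 1 := by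
  have hp : HasDerivAt (fun x : ℝ => 1 + β * x) β 1 := by
    simpa using ((hasDerivAt_id (1 : ℝ)).const_mul β).const_add 1
  have hq : HasDerivAt (fun x : ℝ => 1 - β * x) (-β) 1 := by
    simpa using ((hasDerivAt_id (1 : ℝ)).const_mul β).const_sub 1
  refine ((hp.fun_pow (n + 1)).fun_add (hq.fun_pow (n + 1))).congr_deriv ?_
  push_cast
  ring

theorem hasDerivAt_one_add_div_pow_sub_one_sub_div_pow (β : ℝ) (n : ℕ) :
    HasDerivAt (fun x : ℝ => (1 + β / x) ^ (n + 1) - (1 - β / x) ^ (n + 1))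
      (-((n + 1) * β * ((1 + β) ^ n + (1 - β) ^ n))) 1 := by
  have hdiv : HasDerivAt (fun x : ℝ => β / x) (-β) 1 := by
    simpa [div_eq_mul_inv] using (hasDerivAt_inv one_ne_zero).const_mul β
  have hp : HasDerivAt (fun x : ℝ => 1 + β / x) (-β) 1 := by simpa using hdiv.const_add 1
  have hq : HasDerivAt (fun x : ℝ => 1 - β / x) β 1 := by simpa using hdiv.const_sub 1
  refine ((hp.fun_pow (n + 1)).fun_sub (hq.fun_pow (n + 1))).congr_deriv ?_
  push_cast
  ring

theorem hasDerivAt_quarter_mul_pow_add_mul_pow_sub (β : ℝ) (n : ℕ) :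
    HasDerivAt
      (fun x : ℝ =>
        (1 / 4) * ((1 + β * x) ^ (n + 1) + (1 - β * x) ^ (n + 1)) *
          ((1 + β / x) ^ (n + 1) - (1 - β / x) ^ (n + 1)))
      (-((n + 1) * β * (1 - β ^ 2) ^ n)) 1 := by
  refine (((hasDerivAt_one_add_mul_pow_add_one_sub_mul_pow β n).const_mul (1 / 4 : ℝ)).fun_mul
    (hasDerivAt_one_add_div_pow_sub_one_sub_div_pow β n)).congr_deriv ?_
  rw [show (1 - β ^ 2 : ℝ) = (1 + β) * (1 - β) by ring, mul_pow]
  simp only [mul_one, div_one]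
  ring

theorem stmt1_general (k : ℕ) (β : ℝ) :
    HasDerivAt
      (fun x : ℝ =>
        (1 / 4) * ((1 + β * x) ^ (2 * k + 1) + (1 - β * x) ^ (2 * k + 1)) *
          ((1 + β / x) ^ (2 * k + 1) - (1 - β / x) ^ (2 * k + 1)))
      (-((2 * (k : ℝ) + 1) * β * (1 - β ^ 2) ^ (2 * k))) 1 := by
  simpa using hasDerivAt_quarter_mul_pow_add_mul_pow_sub β (2 * k)

/-- The derivative at `x = 1` of
`h_β(x) = (1/4)((1+βx)^n + (1-βx)^n)((1+β/x)^n - (1-β/x)^n)`, with `n = 2k+1` odd,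
equals `-n β (1-β²)^(n-1)`. -/
theorem stmt1 (k : ℕ) (hk : 1 ≤ k) (β : ℝ) :
    HasDerivAt
      (fun x : ℝ =>
        (1 / 4) * ((1 + β * x) ^ (2 * k + 1) + (1 - β * x) ^ (2 * k + 1)) *
          ((1 + β / x) ^ (2 * k + 1) - (1 - β / x) ^ (2 * k + 1)))
      (-((2 * (k : ℝ) + 1) * β * (1 - β ^ 2) ^ (2 * k))) 1 :=
  stmt1_general k β
end

section
/- For every β > 0 there exists a sequence (φ_N)_{N∈ℕ} of nondecreasing C^∞ functions on ℝ such that: (i) for every x, φ_N(x) → e^{βx} as N → ∞ and 0 ≤ φ_N(x) ≤ C·e^{βx}; (ii) for each N there is C_N with φ_N(x) ≤ C_N·(1+x_+) for all x; (iii) for each j ≥ 2 there is C_j independent of N with |φ_N^{(j)}(x)| ≤ C_j·φ_N'(x), and φ_N'(x) ≤ C·φ_N(x); (iv) φ_N(x) ≤ C·(1+x_+)·φ_N'(x), where all constants C, C_j are independent of N and x_+ = max(x,0). -/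
open Filter

namespace Stmt6Aux

open Real Polynomial

noncomputable def phiA (β a x : ℝ) : ℝ := a * Real.log (1 + Real.exp (β*x)/a)
noncomputable def sigA (β a x : ℝ) : ℝ := Real.exp (β*x) / (a + Real.exp (β*x))

lemma sig_nonneg {β a : ℝ} (ha : 0 < a) (x : ℝ) : 0 ≤ sigA β a x := by
  unfold sigA; positivity

lemma sig_le_one {β a : ℝ} (ha : 0 < a) (x : ℝ) : sigA β a x ≤ 1 := by
  unfold sigA
  rw [div_le_one (by positivity)]
  linarith [Real.exp_pos (β*x)]

lemma hasDerivAt_sig {β a : ℝ} (ha : 0 < a) (x : ℝ) :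
    HasDerivAt (sigA β a) (β * (sigA β a x * (1 - sigA β a x))) x := by
  have ht : HasDerivAt (fun x => Real.exp (β*x)) (β * Real.exp (β*x)) x := by
    have h := (Real.hasDerivAt_exp (β*x)).comp x ((hasDerivAt_id x).const_mul β)
    rw [mul_one, mul_comm] at h
    exact h
  have hne : a + Real.exp (β*x) ≠ 0 := by positivity
  have := ht.div ((hasDerivAt_const x a).add ht) hne
  refine this.congr_deriv ?_
  unfold sigA
  simp only [Pi.add_apply]
  field_simp
  ring

lemma hasDerivAt_phi {β a : ℝ} (ha : 0 < a) (x : ℝ) :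
    HasDerivAt (phiA β a) (β * a * sigA β a x) x := by
  have ht : HasDerivAt (fun x => Real.exp (β*x)) (β * Real.exp (β*x)) x := by
    have h := (Real.hasDerivAt_exp (β*x)).comp x ((hasDerivAt_id x).const_mul β)
    rw [mul_one, mul_comm] at h
    exact h
  have hpos : 0 < 1 + Real.exp (β*x)/a := by positivity
  have hinner : HasDerivAt (fun x => 1 + Real.exp (β*x)/a) (β * Real.exp (β*x) / a) x :=
    by have h := (hasDerivAt_const x (1:ℝ)).add (ht.div_const a); rw [zero_add] at h; exact h
  have hlog := (hinner.log (ne_of_gt hpos)).const_mul a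
  refine hlog.congr_deriv ?_
  unfold sigA
  field_simp

lemma deriv_phi {β a : ℝ} (ha : 0 < a) (x : ℝ) :
    deriv (phiA β a) x = β * a * sigA β a x := (hasDerivAt_phi ha x).deriv

lemma iter_phi (β : ℝ) (k : ℕ) :
    ∃ q : ℝ[X], ∀ a : ℝ, 0 < a → ∀ x : ℝ,
      iteratedDeriv (k+1) (phiA β a) x
        = β^(k+1) * a * (sigA β a x * q.eval (sigA β a x)) := by
  induction k with
  | zero =>
    refine ⟨1, fun a ha x => ?_⟩
    rw [iteratedDeriv_one, (hasDerivAt_phi ha x).deriv]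
    simp
  | succ k ih =>
    obtain ⟨q, hq⟩ := ih
    refine ⟨(1 - X) * (q + X * q.derivative), fun a ha x => ?_⟩
    rw [iteratedDeriv_succ]
    have hfun : iteratedDeriv (k+1) (phiA β a)
        = fun x => β^(k+1) * a * (sigA β a x * q.eval (sigA β a x)) :=
      funext (hq a ha)
    rw [hfun]
    have hs := hasDerivAt_sig (β := β) ha x
    have hqs : HasDerivAt (fun x => q.eval (sigA β a x))
        (q.derivative.eval (sigA β a x) * (β * (sigA β a x * (1 - sigA β a x)))) x := by
      exact (Polynomial.hasDerivAt q (sigA β a x)).comp x hs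
    have hprod : HasDerivAt (fun x => β^(k+1) * a * (sigA β a x * q.eval (sigA β a x))) _ x :=
      ((hs.mul hqs).const_mul (β^(k+1) * a))
    rw [hprod.deriv]
    set s := sigA β a x
    simp only [eval_mul, eval_add, eval_sub, eval_one, eval_X]
    ring

lemma poly_bound (q : ℝ[X]) {s : ℝ} (h0 : 0 ≤ s) (h1 : s ≤ 1) :
    |q.eval s| ≤ ∑ i ∈ Finset.range (q.natDegree + 1), |q.coeff i| := by
  rw [Polynomial.eval_eq_sum_range]
  refine (Finset.abs_sum_le_sum_abs _ _).trans (Finset.sum_le_sum fun i _ => ?_)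
  rw [abs_mul]
  calc |q.coeff i| * |s ^ i| ≤ |q.coeff i| * 1 := by
        refine mul_le_mul_of_nonneg_left ?_ (abs_nonneg _)
        rw [abs_pow, abs_of_nonneg h0]
        exact pow_le_one₀ h0 h1
    _ = |q.coeff i| := mul_one _

lemma phi_nonneg {β a : ℝ} (ha : 0 < a) (x : ℝ) : 0 ≤ phiA β a x := by
  unfold phiA
  have : (0:ℝ) ≤ Real.log (1 + Real.exp (β*x)/a) :=
    Real.log_nonneg (le_add_of_nonneg_right (by positivity))
  positivity

lemma phi_le_exp {β a : ℝ} (ha : 0 < a) (x : ℝ) : phiA β a x ≤ Real.exp (β*x) := by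
  unfold phiA
  have h := Real.log_le_sub_one_of_pos (x := 1 + Real.exp (β*x)/a) (by positivity)
  have : Real.log (1 + Real.exp (β*x)/a) ≤ Real.exp (β*x)/a := by linarith
  calc a * Real.log (1 + Real.exp (β*x)/a) ≤ a * (Real.exp (β*x)/a) :=
        mul_le_mul_of_nonneg_left this ha.le
    _ = Real.exp (β*x) := by field_simp

lemma phi_ge {β a : ℝ} (ha : 0 < a) (x : ℝ) : a * sigA β a x ≤ phiA β a x := by
  unfold phiA sigA
  set t := Real.exp (β*x) with ht
  have htpos : 0 < t := Real.exp_pos _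
  have hpos : (0:ℝ) < 1 + t/a := by positivity
  have h := Real.log_le_sub_one_of_pos (x := (1 + t/a)⁻¹) (by positivity)
  rw [Real.log_inv] at h
  have hlog : t / (a * (1 + t/a)) ≤ Real.log (1 + t/a) := by
    have h3 : t / (a * (1 + t/a)) = 1 - (1 + t/a)⁻¹ := by field_simp; ring
    rw [h3]; linarith
  have heq : a * (t / (a + t)) = a * (t / (a * (1 + t/a))) := by field_simp
  rw [heq]
  exact mul_le_mul_of_nonneg_left hlog ha.le

lemma contDiff_phi {β a : ℝ} (ha : 0 < a) : ContDiff ℝ (⊤ : ℕ∞) (phiA β a) := by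
  have h1 : ContDiff ℝ (⊤ : ℕ∞) (fun x : ℝ => 1 + Real.exp (β*x)/a) :=
    contDiff_const.add ((Real.contDiff_exp.comp (contDiff_const.mul contDiff_id)).div_const a)
  exact contDiff_const.mul (h1.log fun x => by positivity)

lemma log_bound {β a : ℝ} (hβ : 0 < β) (ha : 1 ≤ a) (x : ℝ) :
    Real.log (1 + Real.exp (β*x)/a) ≤ 1 + β * max x 0 := by
  set t := Real.exp (β*x) with ht
  have htpos : 0 < t := Real.exp_pos _
  have h1 : Real.log (1 + t/a) ≤ Real.log (1 + t) := by
    apply Real.log_le_log (by positivity)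
    have : t/a ≤ t := by
      rw [div_le_iff₀ (by linarith)]
      nlinarith
    linarith
  rcases le_or_gt x 0 with hx | hx
  · have hts : t ≤ 1 := by
      rw [ht]; exact Real.exp_le_one_iff.mpr (by nlinarith)
    have : Real.log (1 + t) ≤ Real.log 2 := Real.log_le_log (by positivity) (by linarith)
    have h2 : Real.log 2 ≤ 1 := by
      have := Real.log_le_sub_one_of_pos (x := (2:ℝ)) (by norm_num)
      linarith
    have hm : max x 0 = 0 := max_eq_right hx
    rw [hm]
    linarith
  · have hts : 1 ≤ t := by
      rw [ht]; exact Real.one_le_exp (by positivity)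
    have h2 : Real.log (1 + t) ≤ Real.log (2*t) := Real.log_le_log (by positivity) (by linarith)
    rw [Real.log_mul (by norm_num) (by positivity), ht, Real.log_exp] at h2
    have h3 : Real.log 2 ≤ 1 := by
      have := Real.log_le_sub_one_of_pos (x := (2:ℝ)) (by norm_num)
      linarith
    have hm : max x 0 = x := max_eq_left hx.le
    rw [hm]
    linarith

lemma tendsto_phi {β : ℝ} (x : ℝ) :
    Tendsto (fun N : ℕ => phiA β ((N:ℝ)+1) x) atTop (nhds (Real.exp (β*x))) := by
  set t := Real.exp (β*x) with ht
  have htpos : 0 < t := Real.exp_pos _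
  have haN : ∀ N : ℕ, (0:ℝ) < (N:ℝ)+1 := fun N => by positivity
  have hlow : Tendsto (fun N : ℕ => ((N:ℝ)+1) * sigA β ((N:ℝ)+1) x) atTop (nhds t) := by
    have heq : ∀ N : ℕ, ((N:ℝ)+1) * sigA β ((N:ℝ)+1) x = t / (1 + t/((N:ℝ)+1)) := by
      intro N
      unfold sigA
      rw [← ht]
      field_simp
    simp only [heq]
    have h1 : Tendsto (fun N : ℕ => (N:ℝ)+1) atTop atTop :=
      tendsto_atTop_add_const_right _ 1 tendsto_natCast_atTop_atTop
    have h2 : Tendsto (fun N : ℕ => t/((N:ℝ)+1)) atTop (nhds 0) :=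
      Tendsto.div_atTop tendsto_const_nhds h1
    have h3 : Tendsto (fun N : ℕ => 1 + t/((N:ℝ)+1)) atTop (nhds 1) := by
      simpa using tendsto_const_nhds.add h2
    have h4 := (tendsto_const_nhds : Tendsto (fun _ : ℕ => t) atTop (nhds t)).div h3 one_ne_zero
    rw [div_one] at h4
    exact h4
  exact tendsto_of_tendsto_of_tendsto_of_le_of_le hlow tendsto_const_nhds
    (fun N => phi_ge (haN N) x) (fun N => phi_le_exp (haN N) x)

end Stmt6Aux

open Stmt6Aux

/-- Construction of the weight functions `φ_N` in the proof of Theorem 2.1: for every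
`β > 0` there is a sequence of nondecreasing smooth functions `φ_N` converging pointwise
to `e^{βx}`, with `0 ≤ φ_N ≤ C e^{βx}`, `φ_N(x) ≤ C_N (1+x₊)`,
`|φ_N^{(j)}| ≤ C_j φ_N'` for `j ≥ 2`, `φ_N' ≤ C φ_N`, and `φ_N ≤ C (1+x₊) φ_N'`,
where the constants `C, C_j` do not depend on `N`. -/
theorem stmt6 (β : ℝ) (hβ : 0 < β) :
    ∃ φ : ℕ → ℝ → ℝ,
      (∀ N, ContDiff ℝ (⊤ : ℕ∞) (φ N)) ∧
      (∀ N, Monotone (φ N)) ∧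
      (∃ C > 0, ∀ N x, 0 ≤ φ N x ∧ φ N x ≤ C * Real.exp (β * x)) ∧
      (∀ x, Tendsto (fun N => φ N x) atTop (nhds (Real.exp (β * x)))) ∧
      (∀ N, ∃ CN > 0, ∀ x, φ N x ≤ CN * (1 + max x 0)) ∧
      (∀ j, 2 ≤ j → ∃ Cj > 0, ∀ N x, |iteratedDeriv j (φ N) x| ≤ Cj * deriv (φ N) x) ∧
      (∃ C > 0, ∀ N x, deriv (φ N) x ≤ C * φ N x) ∧
      (∃ C > 0, ∀ N x, φ N x ≤ C * (1 + max x 0) * deriv (φ N) x) := by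
  refine ⟨fun N x => phiA β ((N:ℝ)+1) x, ?_, ?_, ?_, ?_, ?_, ?_, ?_, ?_⟩
  · exact fun N => contDiff_phi (by positivity)
  · -- Monotone
    intro N
    have ha : (0:ℝ) < (N:ℝ)+1 := by positivity
    refine monotone_of_deriv_nonneg
      (fun x => (hasDerivAt_phi ha x).differentiableAt) (fun x => ?_)
    rw [deriv_phi ha]
    have := sig_nonneg (β := β) ha x
    positivity
  · -- 0 ≤ φ ≤ C exp
    refine ⟨1, one_pos, fun N x => ?_⟩
    have ha : (0:ℝ) < (N:ℝ)+1 := by positivity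
    exact ⟨phi_nonneg ha x, by simpa using phi_le_exp ha x⟩
  · exact fun x => tendsto_phi x
  · -- per-N linear bound
    intro N
    have ha : (0:ℝ) < (N:ℝ)+1 := by positivity
    refine ⟨((N:ℝ)+1) * (1+β), by positivity, fun x => ?_⟩
    have hL := log_bound (a := (N:ℝ)+1) hβ (by simp) x
    have hm : (0:ℝ) ≤ max x 0 := le_max_right _ _
    have h1 : phiA β ((N:ℝ)+1) x ≤ ((N:ℝ)+1) * (1 + β * max x 0) := by
      unfold phiA
      exact mul_le_mul_of_nonneg_left hL ha.le
    have h2 : 1 + β * max x 0 ≤ (1+β) * (1 + max x 0) := by nlinarith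
    calc phiA β ((N:ℝ)+1) x ≤ ((N:ℝ)+1) * (1 + β * max x 0) := h1
      _ ≤ ((N:ℝ)+1) * ((1+β) * (1 + max x 0)) := mul_le_mul_of_nonneg_left h2 ha.le
      _ = ((N:ℝ)+1) * (1+β) * (1 + max x 0) := by ring
  · -- higher derivatives
    intro j hj
    obtain ⟨k, rfl⟩ : ∃ k, j = k + 1 := ⟨j - 1, by omega⟩
    obtain ⟨q, hq⟩ := iter_phi β k
    set B : ℝ := ∑ i ∈ Finset.range (q.natDegree + 1), |q.coeff i| with hB
    have hB0 : 0 ≤ B := Finset.sum_nonneg fun i _ => abs_nonneg _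
    refine ⟨β^k * B + 1, by positivity, fun N x => ?_⟩
    have ha : (0:ℝ) < (N:ℝ)+1 := by positivity
    set a : ℝ := (N:ℝ)+1
    set s := sigA β a x with hs
    have hs0 : 0 ≤ s := sig_nonneg ha x
    have hs1 : s ≤ 1 := sig_le_one ha x
    rw [hq a ha x, deriv_phi ha, ← hs]
    have habs : |β^(k+1) * a * (s * q.eval s)| = β^(k+1) * a * (s * |q.eval s|) := by
      rw [abs_mul, abs_mul, abs_mul, abs_of_pos (pow_pos hβ _), abs_of_pos ha,
        abs_of_nonneg hs0]
    rw [habs]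
    have hqb : |q.eval s| ≤ B := poly_bound q hs0 hs1
    have hderiv0 : 0 ≤ β * a * s := by positivity
    calc β^(k+1) * a * (s * |q.eval s|) ≤ β^(k+1) * a * (s * B) := by
          have := mul_le_mul_of_nonneg_left hqb hs0
          exact mul_le_mul_of_nonneg_left this (by positivity)
      _ = (β^k * B) * (β * a * s) := by ring
      _ ≤ (β^k * B + 1) * (β * a * s) := by nlinarith
  · -- deriv ≤ C φ
    refine ⟨β, hβ, fun N x => ?_⟩
    have ha : (0:ℝ) < (N:ℝ)+1 := by positivity
    rw [deriv_phi ha]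
    have := phi_ge (β := β) ha x
    nlinarith
  · -- φ ≤ C (1+x₊) deriv
    refine ⟨(2+β)/β, by positivity, fun N x => ?_⟩
    have ha : (0:ℝ) < (N:ℝ)+1 := by positivity
    set a : ℝ := (N:ℝ)+1
    set t := Real.exp (β*x) with ht
    have htpos : 0 < t := Real.exp_pos _
    set m := max x 0 with hm
    have hm0 : (0:ℝ) ≤ m := le_max_right _ _
    set L := Real.log (1 + t/a) with hL
    have hL0 : 0 ≤ L := Real.log_nonneg (le_add_of_nonneg_right (by positivity))
    have hL1 : L ≤ t/a := by
      have h := Real.log_le_sub_one_of_pos (x := 1 + t/a) (by positivity)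
      rw [hL]; linarith
    have hL1' : a * L ≤ t := by
      calc a * L ≤ a * (t/a) := mul_le_mul_of_nonneg_left hL1 ha.le
        _ = t := by field_simp
    have hL2 : L ≤ 1 + β * m := log_bound hβ (by simp [a]) x
    rw [deriv_phi ha]
    have hsig : sigA β a x = t / (a + t) := by rw [ht]; rfl
    rw [hsig]
    have hphi : phiA β a x = a * L := by rw [hL, ht]; rfl
    show phiA β a x ≤ _
    rw [hphi]
    have key : L * (a + t) ≤ (2+β) * (1+m) * t := by nlinarith
    have h4 : a * L ≤ ((2+β) * (1+m) * t * a) / (a + t) := by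
      rw [le_div_iff₀ (by positivity)]
      nlinarith
    calc a * L ≤ ((2+β) * (1+m) * t * a) / (a + t) := h4
      _ = (2+β)/β * (1+m) * (β * a * (t/(a+t))) := by field_simp
end

section
/- Let φ : ℝ → ℝ be a nonnegative nondecreasing C^∞ function and let w ∈ H^2(ℝ) be such that φ·w², φ'·w², φ'·(w')², φ'·(w'')², and φ'''·w² are all integrable, with |φ'''| ≤ C₀·φ' and φ' ≤ C₀·φ for some C₀ > 0. Then for every ε > 0 there is C_ε > 0 (depending only on ε and C₀) such that ∫ φ'·(∂_x w)² dx ≤ ε·∫ φ'·(∂_x² w)² dx + C_ε·∫ φ·w² dx. -/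
open MeasureTheory Set Filter Topology

/-- A continuous nonnegative derivative of a nonnegative function is integrable on `Iic b`. -/
lemma aux_int_Iic {p φ : ℝ → ℝ} (hc : Continuous p) (hp0 : ∀ x, 0 ≤ p x)
    (hder : ∀ x, HasDerivAt φ (p x) x) (hφ0 : ∀ x, 0 ≤ φ x) (b : ℝ) :
    IntegrableOn p (Iic b) := by
  refine integrableOn_Iic_of_intervalIntegral_norm_bounded (φ b) b
    (a := fun i : ℝ => i) (l := atBot) (fun i => (hc.integrableOn_Ioc)) tendsto_id ?_
  filter_upwards with i
  have hnorm : (fun x => ‖p x‖) = p := funext fun x => Real.norm_of_nonneg (hp0 x)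
  rw [hnorm, intervalIntegral.integral_eq_sub_of_hasDerivAt (fun x _ => hder x)
    (hc.intervalIntegrable i b)]
  have := hφ0 i
  linarith

set_option maxHeartbeats 2000000 in
/-- Inequality (2.21) for `j = 1`: weighted interpolation of the first derivative between
`w` and `w''` with weights `φ`, `φ'`, where `|φ'''| ≤ C₀ φ'` and `φ' ≤ C₀ φ`. -/
theorem stmt7 (C0 : ℝ) (hC0 : 0 < C0) (ε : ℝ) (hε : 0 < ε) :
    ∃ Cε > 0, ∀ (φ w : ℝ → ℝ),
      ContDiff ℝ (⊤ : ℕ∞) φ → (∀ x, 0 ≤ φ x) → Monotone φ →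
      ContDiff ℝ 2 w →
      Integrable (fun x => φ x * (w x) ^ 2) →
      Integrable (fun x => deriv φ x * (w x) ^ 2) →
      Integrable (fun x => deriv φ x * (deriv w x) ^ 2) →
      Integrable (fun x => deriv φ x * (deriv (deriv w) x) ^ 2) →
      Integrable (fun x => iteratedDeriv 3 φ x * (w x) ^ 2) →
      (∀ x, |iteratedDeriv 3 φ x| ≤ C0 * deriv φ x) →
      (∀ x, deriv φ x ≤ C0 * φ x) →
      (∫ x, deriv φ x * (deriv w x) ^ 2)
        ≤ ε * (∫ x, deriv φ x * (deriv (deriv w) x) ^ 2) + Cε * ∫ x, φ x * (w x) ^ 2 := by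
  refine ⟨C0 * (C0 / 2 + 1 / (4 * ε)), by positivity, ?_⟩
  intro φ w hφ hφ0 hφmono hw h1 h2 h3 h4 h5 hb1 hb2
  -- notation
  set p := deriv φ with hp_def
  set q := deriv (deriv φ) with hq_def
  set r := deriv (deriv (deriv φ)) with hr_def
  have hiter : iteratedDeriv 3 φ = r := by
    simp [iteratedDeriv_succ, iteratedDeriv_zero, hr_def]
  rw [hiter] at h5 hb1
  -- smoothness facts
  have hphiT : ContDiff ℝ (⊤ : ℕ∞) φ := hφ.of_le (by simp)
  have hpT : ContDiff ℝ (⊤ : ℕ∞) p := (contDiff_infty_iff_deriv.mp hphiT).2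
  have hqT : ContDiff ℝ (⊤ : ℕ∞) q := (contDiff_infty_iff_deriv.mp hpT).2
  have hrT : ContDiff ℝ (⊤ : ℕ∞) r := (contDiff_infty_iff_deriv.mp hqT).2
  have hpc : Continuous p := hpT.continuous
  have hqc : Continuous q := hqT.continuous
  have hrc : Continuous r := hrT.continuous
  have hdφ : ∀ x, HasDerivAt φ (p x) x :=
    fun x => ((contDiff_infty_iff_deriv.mp hphiT).1 x).hasDerivAt
  have hdp : ∀ x, HasDerivAt p (q x) x :=
    fun x => ((contDiff_infty_iff_deriv.mp hpT).1 x).hasDerivAt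
  have hdq : ∀ x, HasDerivAt q (r x) x :=
    fun x => ((contDiff_infty_iff_deriv.mp hqT).1 x).hasDerivAt
  -- w facts
  have hw1 : ContDiff ℝ 1 (deriv w) := by
    have := (contDiff_succ_iff_deriv (n := 1)).mp (by exact_mod_cast hw)
    exact this.2.2
  have hdw : ∀ x, HasDerivAt w (deriv w x) x :=
    fun x => ((hw.differentiable (by norm_num)) x).hasDerivAt
  have hdw' : ∀ x, HasDerivAt (deriv w) (deriv (deriv w) x) x :=
    fun x => ((hw1.differentiable (by norm_num)) x).hasDerivAt
  have hwc : Continuous w := hw.continuous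
  have hw'c : Continuous (deriv w) := hw1.continuous
  have hw''c : Continuous (deriv (deriv w)) := (contDiff_one_iff_deriv.mp hw1).2
  -- p ≥ 0
  have hp0 : ∀ x, 0 ≤ p x := by
    intro x
    have h2' : Tendsto (slope φ x) (𝓝[>] x) (𝓝 (p x)) :=
      (hasDerivAt_iff_tendsto_slope.mp (hdφ x)).mono_left
        (nhdsWithin_mono _ (fun y hy => ne_of_gt hy))
    refine ge_of_tendsto h2' ?_
    filter_upwards [self_mem_nhdsWithin] with y hy
    rw [slope_def_field]
    have hyx : (0:ℝ) < y - x := by simpa using sub_pos.mpr (show x < y from hy)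
    exact div_nonneg (sub_nonneg.mpr (hφmono (le_of_lt hy))) hyx.le
  -- p integrable on Iic
  have hIntp : ∀ b, IntegrableOn p (Iic b) := aux_int_Iic hpc hp0 hdφ hφ0
  -- r integrable on Iic
  have hIntr : ∀ b, IntegrableOn r (Iic b) := by
    intro b
    refine Integrable.mono' ((hIntp b).const_mul C0) (hrc.aestronglyMeasurable) ?_
    filter_upwards with x
    exact hb1 x
  -- FTC for p and q on intervals
  have FTCp : ∀ y x : ℝ, ∫ t in y..x, p t = φ x - φ y := fun y x =>
    intervalIntegral.integral_eq_sub_of_hasDerivAt (fun t _ => hdφ t) (hpc.intervalIntegrable y x)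
  have FTCq : ∀ y x : ℝ, ∫ t in y..x, q t = p x - p y := fun y x =>
    intervalIntegral.integral_eq_sub_of_hasDerivAt (fun t _ => hdp t) (hqc.intervalIntegrable y x)
  have FTCr : ∀ y x : ℝ, ∫ t in y..x, r t = q x - q y := fun y x =>
    intervalIntegral.integral_eq_sub_of_hasDerivAt (fun t _ => hdq t) (hrc.intervalIntegrable y x)
  -- q tends to 0 at -infinity
  have hqlim : Tendsto q atBot (𝓝 0) := by
    have hlim : Tendsto q atBot (𝓝 (limUnder atBot q)) :=
      tendsto_limUnder_of_hasDerivAt_of_integrableOn_Iic (a := 0)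
        (fun x _ => hdq x) (hIntr 0)
    set L := limUnder atBot q with hL
    rcases lt_trichotomy L 0 with hL0 | hL0 | hL0
    · exfalso
      -- q < L/2 eventually: p grows linearly, contradicting boundedness on Iic 0
      have hev : ∀ᶠ y in atBot, q y < L / 2 :=
        hlim.eventually (eventually_lt_nhds (by linarith))
      obtain ⟨y₀', hy₀'⟩ := eventually_atBot.mp hev
      set y₀ := min y₀' 0 with hy₀def
      have hy₀0 : y₀ ≤ 0 := min_le_right _ _
      have hbound : ∀ y ≤ y₀, q y < L / 2 := fun y hy => hy₀' y (le_trans hy (min_le_left _ _))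
      -- pick y very negative
      set y := y₀ - (C0 * φ 0 + p y₀ + 1) * (2 / (-L)) with hydef
      have hyy₀ : y ≤ y₀ := by
        have h0 : 0 < -L := by linarith
        have hT : 0 ≤ (C0 * φ 0 + p y₀ + 1) * (2 / (-L)) := by
          have hpy : 0 ≤ p y₀ := hp0 y₀
          have hφ00 : 0 ≤ φ 0 := hφ0 0
          positivity
        rw [hydef]
        exact sub_le_self _ hT
      have hmono : ∫ t in y..y₀, q t ≤ ∫ t in y..y₀, (L/2 : ℝ) := by
        apply intervalIntegral.integral_mono_on hyy₀ (hqc.intervalIntegrable y y₀)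
          (intervalIntegrable_const)
        intro t ht
        exact le_of_lt (hbound t ht.2)
      rw [FTCq, intervalIntegral.integral_const, smul_eq_mul] at hmono
      -- p y ≤ C0 * φ y ≤ C0 * φ 0 since y ≤ 0
      have hpy : p y ≤ C0 * φ 0 := le_trans (hb2 y)
        (by have := hφmono (le_trans hyy₀ hy₀0); nlinarith)
      have hLne : L ≠ 0 := ne_of_lt hL0
      have hcalc : (y₀ - y) * (L / 2) = -(C0 * φ 0 + p y₀ + 1) := by
        rw [hydef]
        field_simp
        try ring
      rw [hcalc] at hmono
      have hpy₀ := hp0 y₀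
      linarith
    · rwa [hL0] at hlim
    · exfalso
      have hev : ∀ᶠ y in atBot, L / 2 < q y :=
        hlim.eventually (eventually_gt_nhds (by linarith))
      obtain ⟨y₀, hy₀⟩ := eventually_atBot.mp hev
      set y := y₀ - (p y₀ + 1) * (2 / L) with hydef
      have hyy₀ : y ≤ y₀ := by
        have hT : 0 ≤ (p y₀ + 1) * (2 / L) := by
          have := hp0 y₀; positivity
        rw [hydef]
        exact sub_le_self _ hT
      have hmono : ∫ t in y..y₀, (L/2 : ℝ) ≤ ∫ t in y..y₀, q t := by
        apply intervalIntegral.integral_mono_on hyy₀ intervalIntegrable_const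
          (hqc.intervalIntegrable y y₀)
        intro t ht
        exact le_of_lt (hy₀ t ht.2)
      rw [FTCq, intervalIntegral.integral_const, smul_eq_mul] at hmono
      have hLne : L ≠ 0 := ne_of_gt hL0
      have hcalc : (y₀ - y) * (L / 2) = p y₀ + 1 := by
        rw [hydef]
        field_simp
        try ring
      rw [hcalc] at hmono
      have := hp0 y
      linarith
  -- |q| ≤ C0 φ
  have hq_bound : ∀ x, |q x| ≤ C0 * φ x := by
    intro x
    have key : ∀ y ≤ x, |q x - q y| ≤ C0 * φ x := by
      intro y hy
      rw [← FTCr y x]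
      have habs : |∫ t in y..x, r t| ≤ ∫ t in y..x, |r t| :=
        intervalIntegral.abs_integral_le_integral_abs hy
      have hmono : ∫ t in y..x, |r t| ≤ ∫ t in y..x, C0 * p t := by
        apply intervalIntegral.integral_mono_on hy ((hrc.abs).intervalIntegrable y x)
          ((hpc.intervalIntegrable y x).const_mul C0)
        intro t _
        exact hb1 t
      have : ∫ t in y..x, C0 * p t = C0 * (φ x - φ y) := by
        rw [intervalIntegral.integral_const_mul, FTCp]
      rw [this] at hmono
      have hφy : 0 ≤ φ y := hφ0 y
      calc |∫ t in y..x, r t| ≤ C0 * (φ x - φ y) := le_trans habs hmono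
        _ ≤ C0 * φ x := by nlinarith
    have htend : Tendsto (fun y => |q x - q y|) atBot (𝓝 |q x - 0|) :=
      ((tendsto_const_nhds.sub hqlim).abs)
    rw [sub_zero] at htend
    refine le_of_tendsto htend ?_
    filter_upwards [eventually_le_atBot x] with y hy using key y hy
  -- the function F and its derivative
  set F : ℝ → ℝ := fun x => p x * w x * deriv w x - (1/2) * q x * (w x)^2 with hF_def
  set F' : ℝ → ℝ := fun x =>
    p x * (deriv w x)^2 + p x * w x * deriv (deriv w) x - (1/2) * r x * (w x)^2 with hF'_def
  have hdF : ∀ x, HasDerivAt F (F' x) x := by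
    intro x
    have h₁ : HasDerivAt (fun x => p x * w x * deriv w x)
        ((q x * w x + p x * deriv w x) * deriv w x
          + p x * w x * deriv (deriv w) x) x :=
      (((hdp x).mul (hdw x)).mul (hdw' x))
    have h₂ : HasDerivAt (fun x => (1/2) * q x * (w x)^2)
        ((1/2) * r x * (w x)^2 + (1/2) * q x * (2 * w x * deriv w x)) x := by
      have hsq : HasDerivAt (fun x => (w x)^2) (2 * w x * deriv w x) x := by
        have := (hdw x).fun_pow 2
        simpa [mul_comm, mul_assoc, mul_left_comm] using this
      have := (((hdq x).const_mul (1/2:ℝ)).fun_mul hsq)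
      convert this using 1
      try ring
    have := h₁.fun_sub h₂
    refine this.congr_deriv ?_
    simp only [hF'_def]
    try ring
  -- integrability of F
  have hmeasF : AEStronglyMeasurable F volume := by
    apply Continuous.aestronglyMeasurable
    fun_prop
  have hintF : Integrable F := by
    have hdom : Integrable (fun x => (1/2) * (p x * (w x)^2 + p x * (deriv w x)^2)
        + (C0/2) * (φ x * (w x)^2)) := (((h2.add h3).const_mul _).add (h1.const_mul _))
    refine Integrable.mono' hdom hmeasF ?_
    filter_upwards with x
    have hpx := hp0 x
    have hqx := hq_bound x
    have habs := abs_nonneg (q x)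
    rw [Real.norm_eq_abs]
    have h1' : |p x * w x * deriv w x| ≤ (1/2) * (p x * (w x)^2 + p x * (deriv w x)^2) := by
      rw [abs_mul, abs_mul, abs_of_nonneg hpx]
      nlinarith [sq_nonneg (|w x| - |deriv w x|), sq_abs (w x), sq_abs (deriv w x),
        abs_nonneg (w x), abs_nonneg (deriv w x)]
    have h2' : |(1/2) * q x * (w x)^2| ≤ (C0/2) * (φ x * (w x)^2) := by
      rw [abs_mul, abs_mul]
      have : |(1/2 : ℝ)| = 1/2 := by norm_num
      rw [this, abs_of_nonneg (sq_nonneg (w x))]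
      nlinarith [sq_nonneg (w x)]
    calc |F x| ≤ |p x * w x * deriv w x| + |(1/2) * q x * (w x)^2| := abs_sub _ _
      _ ≤ _ := add_le_add h1' h2'
  -- integrability of components of F'
  have hint_pww'' : Integrable (fun x => p x * w x * deriv (deriv w) x) := by
    have hdom : Integrable (fun x => (1/2) * (p x * (w x)^2 + p x * (deriv (deriv w) x)^2)) :=
      ((h2.add h4).const_mul _)
    refine Integrable.mono' hdom ?_ ?_
    · apply Continuous.aestronglyMeasurable; fun_prop
    filter_upwards with x
    have hpx := hp0 x
    rw [Real.norm_eq_abs, abs_mul, abs_mul, abs_of_nonneg hpx]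
    nlinarith [sq_nonneg (|w x| - |deriv (deriv w) x|), sq_abs (w x),
      sq_abs (deriv (deriv w) x), abs_nonneg (w x), abs_nonneg (deriv (deriv w) x)]
  have hint_rww : Integrable (fun x => (1/2) * r x * (w x)^2) := by
    have := h5.const_mul (1/2 : ℝ)
    refine this.congr ?_
    filter_upwards with x
    ring
  have hintF' : Integrable F' := (h3.add hint_pww'').sub hint_rww
  -- main identity: ∫ F' = 0
  have hintegral : ∫ x, F' x = 0 :=
    integral_eq_zero_of_hasDerivAt_of_integrable hdF hintF' hintF
  have hsplit : (∫ x, p x * (deriv w x)^2) + (∫ x, p x * w x * deriv (deriv w) x)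
      - (∫ x, (1/2) * r x * (w x)^2) = 0 := by
    have e1 : ∫ x, F' x = (∫ x, (p x * (deriv w x)^2 + p x * w x * deriv (deriv w) x))
        - ∫ x, ((1/2) * r x * (w x)^2) := integral_sub (h3.add hint_pww'') hint_rww
    have e2 : (∫ x, (p x * (deriv w x)^2 + p x * w x * deriv (deriv w) x))
        = (∫ x, p x * (deriv w x)^2) + ∫ x, p x * w x * deriv (deriv w) x :=
      integral_add h3 hint_pww''
    linarith [hintegral, e1, e2]
  -- bounds
  have bound1 : (∫ x, (1/2) * r x * (w x)^2) ≤ (C0/2) * ∫ x, p x * (w x)^2 := by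
    rw [← integral_const_mul]
    apply integral_mono hint_rww (h2.const_mul _)
    intro x
    have habs := abs_le.mp (hb1 x)
    have hsq := sq_nonneg (w x)
    simp only
    nlinarith [habs.2]
  have bound2 : -(∫ x, p x * w x * deriv (deriv w) x)
      ≤ ε * (∫ x, p x * (deriv (deriv w) x)^2) + (1/(4*ε)) * ∫ x, p x * (w x)^2 := by
    rw [← integral_neg, ← integral_const_mul, ← integral_const_mul,
      ← integral_add (h4.const_mul _) (h2.const_mul _)]
    apply integral_mono hint_pww''.neg ((h4.const_mul _).add (h2.const_mul _))
    intro x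
    have hpx := hp0 x
    simp only [Pi.neg_apply, Pi.add_apply]
    have hεne : ε ≠ 0 := ne_of_gt hε
    have expand : ε * (p x * (deriv (deriv w) x)^2) + 1/(4*ε) * (p x * (w x)^2)
        + (p x * w x * deriv (deriv w) x)
        = (1/(4*ε)) * (p x * (2*ε*deriv (deriv w) x + w x)^2) := by
      field_simp
      ring
    have key : 0 ≤ (1/(4*ε)) * (p x * (2*ε*deriv (deriv w) x + w x)^2) := by
      have h1 : (0:ℝ) ≤ 1/(4*ε) := by positivity
      exact mul_nonneg h1 (mul_nonneg hpx (sq_nonneg _))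
    linarith [key, expand]
  have bound3 : (∫ x, p x * (w x)^2) ≤ C0 * ∫ x, φ x * (w x)^2 := by
    rw [← integral_const_mul]
    apply integral_mono h2 (h1.const_mul _)
    intro x
    have hsq := sq_nonneg (w x)
    simp only
    nlinarith [hb2 x]
  have hpos : (0:ℝ) ≤ C0 / 2 + 1 / (4 * ε) := by positivity
  have final : (∫ x, p x * (deriv w x)^2)
      ≤ ε * (∫ x, p x * (deriv (deriv w) x)^2)
        + (C0 / 2 + 1 / (4 * ε)) * ∫ x, p x * (w x)^2 := by
    nlinarith [hsplit, bound1, bound2]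
  calc (∫ x, p x * (deriv w x)^2)
      ≤ ε * (∫ x, p x * (deriv (deriv w) x)^2)
        + (C0 / 2 + 1 / (4 * ε)) * ∫ x, p x * (w x)^2 := final
    _ ≤ ε * (∫ x, p x * (deriv (deriv w) x)^2)
        + C0 * (C0 / 2 + 1 / (4 * ε)) * ∫ x, φ x * (w x)^2 := by
        nlinarith [bound3, hpos]
end

section
/- Let n = 2k+1 with k ≥ 1 and let B be a smooth function of x with ∂_x² B = 0. In the expansion of the operator (∂_x + B)^n as a sum of compositions T_1∘…∘T_n with each T_i ∈ {∂_x, B·}, the sum [m,l] of all terms containing exactly m factors ∂_x and l = n-m factors B equals C(n,m)·[B^l ∂_x^m + (ml/2)·B^{l-1} B_x ∂_x^{m-1}] plus a differential operator of order ≤ m-2. -/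
noncomputable def compOp (B : ℝ → ℝ) : List Bool → (ℝ → ℝ) → ℝ → ℝ
  | [], f => f
  | b :: L, f => if b then deriv (compOp B L f) else fun x => B x * compOp B L f x

namespace Stmt12Aux

open scoped ContDiff

noncomputable def coeffFn (B : ℝ → ℝ) : List Bool → ℕ → ℝ → ℝ
  | [], 0 => fun _ => 1
  | [], _ + 1 => fun _ => 0
  | false :: L, j => fun x => B x * coeffFn B L j x
  | true :: L, 0 => deriv (coeffFn B L 0)
  | true :: L, j + 1 => fun x => deriv (coeffFn B L (j + 1)) x + coeffFn B L j x

theorem compOp_false (B : ℝ → ℝ) (L : List Bool) (f : ℝ → ℝ) :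
    compOp B (false :: L) f = fun x => B x * compOp B L f x := rfl

theorem compOp_true (B : ℝ → ℝ) (L : List Bool) (f : ℝ → ℝ) :
    compOp B (true :: L) f = deriv (compOp B L f) := rfl

theorem coeffFn_false (B : ℝ → ℝ) (L : List Bool) (j : ℕ) (x : ℝ) :
    coeffFn B (false :: L) j x = B x * coeffFn B L j x := rfl

theorem coeffFn_true_zero (B : ℝ → ℝ) (L : List Bool) :
    coeffFn B (true :: L) 0 = deriv (coeffFn B L 0) := rfl

theorem coeffFn_true_succ (B : ℝ → ℝ) (L : List Bool) (j : ℕ) (x : ℝ) :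
    coeffFn B (true :: L) (j + 1) x = deriv (coeffFn B L (j + 1)) x + coeffFn B L j x := rfl

theorem coeff_smooth {B : ℝ → ℝ} (hB : ContDiff ℝ ∞ B) :
    ∀ (L : List Bool) (j : ℕ), ContDiff ℝ ∞ (coeffFn B L j)
  | [], 0 => contDiff_const
  | [], _ + 1 => contDiff_const
  | false :: L, j => hB.mul (coeff_smooth hB L j)
  | true :: L, 0 => (contDiff_infty_iff_deriv.mp (coeff_smooth hB L 0)).2
  | true :: L, j + 1 => by
      have : coeffFn B (true :: L) (j + 1)
          = fun x => deriv (coeffFn B L (j + 1)) x + coeffFn B L j x := rfl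
      rw [this]
      exact ((contDiff_infty_iff_deriv.mp (coeff_smooth hB L (j + 1))).2).add
        (coeff_smooth hB L j)

theorem coeff_diff {B : ℝ → ℝ} (hB : ContDiff ℝ ∞ B) (L : List Bool) (j : ℕ) :
    Differentiable ℝ (coeffFn B L j) := (coeff_smooth hB L j).differentiable (by simp)

theorem coeff_vanish {B : ℝ → ℝ} :
    ∀ (L : List Bool) (j : ℕ), L.count true < j → coeffFn B L j = fun _ => 0
  | [], 0, h => absurd h (by simp)
  | [], j + 1, _ => rfl
  | false :: L, j, h => by
      have h' : L.count true < j := by simpa using h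
      funext x
      rw [coeffFn_false, coeff_vanish L j h']
      simp
  | true :: L, 0, h => absurd h (by simp)
  | true :: L, j + 1, h => by
      have h' : L.count true < j := by simpa [List.count_cons] using h
      funext x
      rw [coeffFn_true_succ, coeff_vanish L (j + 1) (h'.trans (Nat.lt_succ_self j)),
        coeff_vanish L j h']
      simp

theorem sum_shift (n : ℕ) (d c F : ℕ → ℝ) (hd : d (n + 1) = 0) :
    ∑ j ∈ Finset.range (n + 1), (d j * F j + c j * F (j + 1))
      = d 0 * F 0 + ∑ j ∈ Finset.range (n + 1), (d (j + 1) + c j) * F (j + 1) := by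
  rw [Finset.sum_add_distrib]
  have h1 : ∑ j ∈ Finset.range (n + 1), d j * F j
      = d 0 * F 0 + ∑ j ∈ Finset.range n, d (j + 1) * F (j + 1) := by
    rw [Finset.sum_range_succ']; ring
  have h2 : ∑ j ∈ Finset.range (n + 1), d (j + 1) * F (j + 1)
      = ∑ j ∈ Finset.range n, d (j + 1) * F (j + 1) := by
    rw [Finset.sum_range_succ, hd]; ring
  simp only [add_mul, Finset.sum_add_distrib, h1, h2]
  ring

theorem rep {B : ℝ → ℝ} (hB : ContDiff ℝ ∞ B) :
    ∀ (L : List Bool) (f : ℝ → ℝ), ContDiff ℝ ∞ f → ∀ x,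
      compOp B L f x =
        ∑ j ∈ Finset.range (L.length + 1), coeffFn B L j x * iteratedDeriv j f x := by
  intro L
  induction L with
  | nil =>
    intro f hf x
    simp [compOp, coeffFn]
  | cons b L ih =>
    cases b with
    | false =>
      intro f hf x
      have hv : coeffFn B L (L.length + 1) x = 0 := by
        rw [coeff_vanish L _ (Nat.lt_succ_of_le (List.count_le_length))]
      rw [compOp_false]
      show B x * compOp B L f x = _
      rw [ih f hf x, Finset.mul_sum, List.length_cons]
      conv_rhs => rw [Finset.sum_range_succ]
      simp only [coeffFn_false]
      rw [hv]
      simp [mul_assoc]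
    | true =>
      intro f hf x
      have hrep : compOp B L f = fun y =>
          ∑ j ∈ Finset.range (L.length + 1), coeffFn B L j y * iteratedDeriv j f y :=
        funext (ih f hf)
      have hdf : ∀ j : ℕ, Differentiable ℝ (iteratedDeriv j f) := by
        intro j
        rw [iteratedDeriv_eq_iterate]
        exact (hf.iterate_deriv j).differentiable (by simp)
      have hterm : ∀ j, deriv (fun y => coeffFn B L j y * iteratedDeriv j f y) x
          = deriv (coeffFn B L j) x * iteratedDeriv j f x
            + coeffFn B L j x * iteratedDeriv (j + 1) f x := by
        intro j
        rw [deriv_fun_mul (coeff_diff hB L j x) (hdf j x), iteratedDeriv_succ]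
      have hv : deriv (coeffFn B L (L.length + 1)) x = 0 := by
        rw [coeff_vanish L _ (Nat.lt_succ_of_le (List.count_le_length))]
        simp
      rw [compOp_true, hrep]
      rw [deriv_fun_sum (A := fun j y => coeffFn B L j y * iteratedDeriv j f y) (fun j _ => ((coeff_diff hB L j) x).mul ((hdf j) x))]
      rw [Finset.sum_congr rfl fun j _ => hterm j]
      rw [sum_shift (L.length) (fun j => deriv (coeffFn B L j) x) (fun j => coeffFn B L j x)
        (fun j => iteratedDeriv j f x) hv]
      rw [List.length_cons,
        Finset.sum_range_succ' (fun j => coeffFn B (true :: L) j x * iteratedDeriv j f x)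
          (L.length + 1)]
      simp only [coeffFn_true_succ, coeffFn_true_zero]
      ring

def invN : List Bool → ℕ
  | [] => 0
  | true :: L => L.count false + invN L
  | false :: L => invN L

theorem invN_of_count_false {L : List Bool} (h : L.count false = 0) : invN L = 0 := by
  induction L with
  | nil => rfl
  | cons b L ih =>
    cases b with
    | false => simp [List.count_cons] at h
    | true =>
      have h' : L.count false = 0 := by simpa [List.count_cons] using h
      simp [invN, h', ih h']

theorem invN_of_count_true {L : List Bool} (h : L.count true = 0) : invN L = 0 := by
  induction L with
  | nil => rfl
  | cons b L ih =>
    cases b with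
    | true => simp [List.count_cons] at h
    | false =>
      have h' : L.count true = 0 := by simpa [List.count_cons] using h
      simp [invN, ih h']

theorem coeff_top {B : ℝ → ℝ} :
    ∀ (L : List Bool) (x : ℝ), coeffFn B L (L.count true) x = B x ^ L.count false := by
  intro L
  induction L with
  | nil => intro x; simp [coeffFn]
  | cons b L ih =>
    cases b with
    | false =>
      intro x
      have hc : (false :: L).count true = L.count true := by simp [List.count_cons]
      have hc' : (false :: L).count false = L.count false + 1 := by simp [List.count_cons]
      rw [hc, coeffFn_false, ih x, hc', pow_succ]
      ring
    | true =>
      intro x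
      have hc : (true :: L).count true = L.count true + 1 := by simp [List.count_cons]
      have hc' : (true :: L).count false = L.count false := by simp [List.count_cons]
      rw [hc, hc', coeffFn_true_succ,
        coeff_vanish L (L.count true + 1) (Nat.lt_succ_self _), ih x]
      simp

theorem coeff_top' {B : ℝ → ℝ} (L : List Bool) :
    coeffFn B L (L.count true) = fun x => B x ^ L.count false :=
  funext (coeff_top L)

theorem coeff_second {B : ℝ → ℝ} (hB : ContDiff ℝ ∞ B) :
    ∀ (L : List Bool), 1 ≤ L.count true → ∀ x : ℝ,
      coeffFn B L (L.count true - 1) x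
        = (invN L : ℝ) * B x ^ (L.count false - 1) * deriv B x := by
  intro L
  induction L with
  | nil => intro h; simp at h
  | cons b L ih =>
    cases b with
    | false =>
      intro h x
      have h1 : 1 ≤ L.count true := by simpa [List.count_cons] using h
      have hc : (false :: L).count true = L.count true := by simp [List.count_cons]
      have hc' : (false :: L).count false = L.count false + 1 := by simp [List.count_cons]
      rw [hc, coeffFn_false, ih h1 x, hc']
      have hN : invN (false :: L) = invN L := rfl
      rw [hN]
      rcases Nat.eq_zero_or_pos (L.count false) with h0 | hpos
      · rw [invN_of_count_false h0]; simp
      · have hcf : L.count false - 1 + 1 = L.count false := Nat.succ_pred_eq_of_pos hpos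
        rw [Nat.add_sub_cancel]
        conv_rhs => rw [← hcf]
        rw [pow_succ]
        ring
    | true =>
      intro _ x
      have hBd : Differentiable ℝ B := hB.differentiable (by simp)
      have hc : (true :: L).count true = L.count true + 1 := by simp [List.count_cons]
      have hc' : (true :: L).count false = L.count false := by simp [List.count_cons]
      have hN : invN (true :: L) = L.count false + invN L := rfl
      rw [hc, hc', hN, Nat.add_sub_cancel]
      rcases Nat.eq_zero_or_pos (L.count true) with h0 | hpos
      · rw [h0, coeffFn_true_zero]
        have htop : coeffFn B L 0 = fun y => B y ^ L.count false := by
          rw [← h0]; exact coeff_top' L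
        rw [htop, deriv_fun_pow (hBd x), invN_of_count_true h0]
        push_cast
        ring
      · obtain ⟨s, hs⟩ : ∃ s, L.count true = s + 1 :=
          ⟨L.count true - 1, (Nat.succ_pred_eq_of_pos hpos).symm⟩
        rw [hs, coeffFn_true_succ]
        have htop : coeffFn B L (s + 1) = fun y => B y ^ L.count false := by
          rw [← hs]; exact coeff_top' L
        have hsec := ih hpos x
        rw [hs, Nat.add_sub_cancel] at hsec
        rw [htop, deriv_fun_pow (hBd x), hsec]
        push_cast
        ring

theorem invN_append_true (M : List Bool) : invN (M ++ [true]) = invN M := by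
  induction M with
  | nil => rfl
  | cons b M ih => cases b <;> simp [invN, ih, List.count_append]

theorem invN_append_false (M : List Bool) : invN (M ++ [false]) = invN M + M.count true := by
  induction M with
  | nil => rfl
  | cons b M ih =>
    cases b <;> simp [invN, ih, List.count_append] <;> omega

theorem invN_rev (L : List Bool) :
    invN L + invN L.reverse = L.count true * L.count false := by
  induction L with
  | nil => rfl
  | cons b L ih =>
    cases b with
    | true =>
      rw [List.reverse_cons, invN_append_true]
      have e0 : invN (true :: L) = L.count false + invN L := rfl
      have h1 : (true :: L).count true = L.count true + 1 := by simp [List.count_cons]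
      have h2 : (true :: L).count false = L.count false := by simp [List.count_cons]
      rw [e0, h1, h2, Nat.succ_mul, ← ih]
      omega
    | false =>
      rw [List.reverse_cons, invN_append_false, List.count_reverse]
      have e0 : invN (false :: L) = invN L := rfl
      have h1 : (false :: L).count true = L.count true := by simp [List.count_cons]
      have h2 : (false :: L).count false = L.count false + 1 := by simp [List.count_cons]
      rw [e0, h1, h2, Nat.mul_succ, ← ih]
      omega

theorem count_add (L : List Bool) : L.count true + L.count false = L.length := by
  induction L with
  | nil => rfl
  | cons b L ih => cases b <;> simp [List.count_cons] <;> omega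

theorem count_ofFn_true : ∀ {n : ℕ} (g : Fin n → Bool),
    (List.ofFn g).count true = (Finset.univ.filter fun i => g i = true).card := by
  intro n
  induction n with
  | zero => intro g; simp
  | succ n ih =>
    intro g
    rw [List.ofFn_succ, Finset.card_filter, Fin.sum_univ_succ, List.count_cons, ih,
      Finset.card_filter]
    by_cases h : g 0 = true <;> simp [h] <;> omega

theorem ofFn_rev {n : ℕ} (g : Fin n → Bool) :
    List.ofFn (fun i => g i.rev) = (List.ofFn g).reverse := by
  apply List.ext_getElem
  · simp
  · intro i h1 h2
    simp only [List.getElem_ofFn, List.getElem_reverse, List.length_ofFn]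
    congr 1
    apply Fin.ext
    simp [Fin.val_rev]
    omega

theorem card_S (n m : ℕ) :
    (Finset.univ.filter fun g : Fin n → Bool =>
      (Finset.univ.filter fun i => g i = true).card = m).card = n.choose m := by
  have h2 : (Finset.powersetCard m (Finset.univ : Finset (Fin n))).card = n.choose m := by
    simp [Finset.card_powersetCard]
  rw [← h2]
  refine Finset.card_bij' (fun g _ => Finset.univ.filter fun i => g i = true)
    (fun s _ => fun i => decide (i ∈ s)) ?_ ?_ ?_ ?_
  · intro g hg
    simp only [Finset.mem_filter, Finset.mem_univ, true_and] at hg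
    simp [Finset.mem_powersetCard, hg]
  · intro s hs
    simp only [Finset.mem_powersetCard] at hs
    simp only [Finset.mem_filter, Finset.mem_univ, true_and]
    have hfs : (Finset.univ.filter fun i => decide (i ∈ s) = true) = s := by
      ext i; simp
    rw [hfs, hs.2]
  · intro g hg
    funext i
    simp
  · intro s hs
    ext i
    simp

theorem sum_invN (n m : ℕ) :
    2 * ∑ g ∈ (Finset.univ.filter fun g : Fin n → Bool =>
        (Finset.univ.filter fun i => g i = true).card = m), invN (List.ofFn g)
      = n.choose m * (m * (n - m)) := by
  set S := Finset.univ.filter fun g : Fin n → Bool =>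
    (Finset.univ.filter fun i => g i = true).card = m with hS
  have hmem : ∀ g : Fin n → Bool, g ∈ S ↔ (List.ofFn g).count true = m := by
    intro g
    rw [hS, Finset.mem_filter]
    simp [count_ofFn_true]
  have hswap : ∑ g ∈ S, invN (List.ofFn g) = ∑ g ∈ S, invN ((List.ofFn g).reverse) := by
    refine Finset.sum_nbij' (i := fun g => fun i => g i.rev) (j := fun g => fun i => g i.rev)
      ?_ ?_ ?_ ?_ ?_
    · intro g hg
      rw [hmem] at hg ⊢
      rw [ofFn_rev, List.count_reverse, hg]
    · intro g hg
      rw [hmem] at hg ⊢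
      rw [ofFn_rev, List.count_reverse, hg]
    · intro g _
      funext i
      simp
    · intro g _
      funext i
      simp
    · intro g _
      rw [ofFn_rev, List.reverse_reverse]
  have hpair : ∀ g ∈ S, invN (List.ofFn g) + invN ((List.ofFn g).reverse) = m * (n - m) := by
    intro g hg
    have hct : (List.ofFn g).count true = m := (hmem g).mp hg
    have hcf : (List.ofFn g).count false = n - m := by
      have h := count_add (List.ofFn g)
      rw [hct, List.length_ofFn] at h
      omega
    rw [invN_rev, hct, hcf]
  have h2 : 2 * ∑ g ∈ S, invN (List.ofFn g)
      = ∑ g ∈ S, (invN (List.ofFn g) + invN ((List.ofFn g).reverse)) := by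
    rw [Finset.sum_add_distrib, ← hswap]
    ring
  rw [h2, Finset.sum_congr rfl hpair, Finset.sum_const, hS, card_S, smul_eq_mul]

end Stmt12Aux

open Stmt12Aux in
/-- Formula (4.14): for `B` affine in `x` (`B'' = 0`) and `n = 2k+1`, the sum `[m, l]`
(`l = n - m`) of all terms of the expansion of `(∂_x + B)^n` with exactly `m` factors
`∂_x` and `l` factors `B` equals
`C(n,m) [B^l ∂_x^m + (ml/2) B^{l-1} B_x ∂_x^{m-1}]` plus a differential operator of
order `≤ m-2`. -/
theorem stmt12 (k : ℕ) (hk : 1 ≤ k) (B : ℝ → ℝ) (hB : ContDiff ℝ (⊤ : ℕ∞) B)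
    (hB2 : ∀ x, deriv (deriv B) x = 0) (m : ℕ) (hm : m ≤ 2 * k + 1) :
    ∃ a : ℕ → ℝ → ℝ, ∀ f : ℝ → ℝ, ContDiff ℝ (⊤ : ℕ∞) f → ∀ x : ℝ,
      (∑ g ∈ Finset.univ.filter
          (fun g : Fin (2 * k + 1) → Bool =>
            (Finset.univ.filter fun i => g i = true).card = m),
        compOp B (List.ofFn g) f x)
        = ((2 * k + 1).choose m : ℝ) *
            ((B x) ^ (2 * k + 1 - m) * iteratedDeriv m f x +
              ((m * (2 * k + 1 - m) : ℕ) : ℝ) / 2 * (B x) ^ (2 * k - m) * deriv B x *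
                iteratedDeriv (m - 1) f x)
          + ∑ j ∈ Finset.range (m - 1), a j x * iteratedDeriv j f x := by
  classical
  have hB' : ContDiff ℝ (⊤ : ℕ∞) B := hB.of_le (by simp)
  set S := Finset.univ.filter
    (fun g : Fin (2 * k + 1) → Bool =>
      (Finset.univ.filter fun i => g i = true).card = m) with hS
  refine ⟨fun j x => ∑ g ∈ S, coeffFn B (List.ofFn g) j x, ?_⟩
  intro f hf x
  have hf' : ContDiff ℝ (⊤ : ℕ∞) f := hf.of_le (by simp)
  beta_reduce
  have hmemct : ∀ g ∈ S, (List.ofFn g).count true = m := by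
    intro g hg
    rw [count_ofFn_true]
    exact (Finset.mem_filter.mp hg).2
  have hmemcf : ∀ g ∈ S, (List.ofFn g).count false = 2 * k + 1 - m := by
    intro g hg
    have h := count_add (List.ofFn g)
    rw [hmemct g hg, List.length_ofFn] at h
    omega
  have h1 : ∀ g ∈ S, compOp B (List.ofFn g) f x
      = ∑ j ∈ Finset.range (2 * k + 1 + 1),
          coeffFn B (List.ofFn g) j x * iteratedDeriv j f x := by
    intro g _
    have h := rep hB' (List.ofFn g) f hf' x
    rwa [List.length_ofFn] at h
  rw [Finset.sum_congr rfl h1, Finset.sum_comm]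
  simp_rw [← Finset.sum_mul]
  have hsub : Finset.range (m + 1) ⊆ Finset.range (2 * k + 1 + 1) :=
    Finset.range_subset_range.mpr (by omega)
  have hzero : ∀ j ∈ Finset.range (2 * k + 1 + 1), j ∉ Finset.range (m + 1) →
      (∑ g ∈ S, coeffFn B (List.ofFn g) j x) * iteratedDeriv j f x = 0 := by
    intro j _ hj'
    have hjm : m < j := by
      simp only [Finset.mem_range] at hj'
      omega
    have hz : ∀ g ∈ S, coeffFn B (List.ofFn g) j x = 0 := by
      intro g hg
      rw [coeff_vanish (List.ofFn g) j (by rw [hmemct g hg]; exact hjm)]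
    rw [Finset.sum_congr rfl hz]
    simp
  rw [← Finset.sum_subset hsub hzero]
  rcases Nat.eq_zero_or_pos m with hm0 | hm1
  · subst hm0
    rw [Finset.sum_range_one]
    have hA0 : ∑ g ∈ S, coeffFn B (List.ofFn g) 0 x
        = ((2 * k + 1).choose 0 : ℝ) * B x ^ (2 * k + 1) := by
      have hval : ∀ g ∈ S, coeffFn B (List.ofFn g) 0 x = B x ^ (2 * k + 1) := by
        intro g hg
        have h := coeff_top (B := B) (List.ofFn g) x
        rw [hmemct g hg, hmemcf g hg] at h
        simpa using h
      rw [Finset.sum_congr rfl hval, Finset.sum_const, hS, card_S, nsmul_eq_mul]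
    rw [hA0]
    simp
  · obtain ⟨t, rfl⟩ : ∃ t, m = t + 1 := ⟨m - 1, by omega⟩
    rw [Finset.sum_range_succ, Finset.sum_range_succ]
    have hAm : ∑ g ∈ S, coeffFn B (List.ofFn g) (t + 1) x
        = ((2 * k + 1).choose (t + 1) : ℝ) * B x ^ (2 * k + 1 - (t + 1)) := by
      have hval : ∀ g ∈ S, coeffFn B (List.ofFn g) (t + 1) x
          = B x ^ (2 * k + 1 - (t + 1)) := by
        intro g hg
        have h := coeff_top (B := B) (List.ofFn g) x
        rw [hmemct g hg, hmemcf g hg] at h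
        exact h
      rw [Finset.sum_congr rfl hval, Finset.sum_const, hS, card_S, nsmul_eq_mul]
    have hAm1 : ∑ g ∈ S, coeffFn B (List.ofFn g) t x
        = (∑ g ∈ S, (invN (List.ofFn g) : ℝ)) * B x ^ (2 * k - (t + 1)) * deriv B x := by
      rw [Finset.sum_mul, Finset.sum_mul]
      refine Finset.sum_congr rfl ?_
      intro g hg
      have h2 := coeff_second hB' (List.ofFn g) (by rw [hmemct g hg]; omega) x
      rw [hmemct g hg, hmemcf g hg] at h2
      have he : 2 * k + 1 - (t + 1) - 1 = 2 * k - (t + 1) := by omega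
      rw [he] at h2
      simpa using h2
    have hinv : (∑ g ∈ S, (invN (List.ofFn g) : ℝ))
        = ((2 * k + 1).choose (t + 1) : ℝ)
          * (((t + 1) * (2 * k + 1 - (t + 1)) : ℕ) : ℝ) / 2 := by
      have h2 := sum_invN (2 * k + 1) (t + 1)
      rw [← hS] at h2
      have h3 : (2 : ℝ) * ∑ g ∈ S, (invN (List.ofFn g) : ℝ)
          = ((2 * k + 1).choose (t + 1) : ℝ)
            * (((t + 1) * (2 * k + 1 - (t + 1)) : ℕ) : ℝ) := by
        rw [← Nat.cast_sum]
        exact_mod_cast congrArg (fun z : ℕ => (z : ℝ)) h2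
      linarith
    rw [hAm, hAm1, hinv]
    have ht1 : t + 1 - 1 = t := rfl
    rw [ht1]
    ring
end

section
/- Let D = ℝ × [0,1] and let [m, n-m] denote the symmetric (m even) or antisymmetric (m odd) part of the binomial expansion of (∂_x + B)^n as in Lemma 4.6, with B affine in x. If m is even then ⟨[m,n-m]f, g⟩_{L²(D)} = ⟨f, [m,n-m]g⟩_{L²(D)}, and if m is odd then ⟨[m,n-m]f, g⟩_{L²(D)} = -⟨f, [m,n-m]g⟩_{L²(D)}, for all smooth f, g vanishing at t = 0, t = 1 and compactly supported in x. -/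
open MeasureTheory

/-- Composition of operators indexed by a list of booleans, acting on functions of
`(x, t)`: `true` stands for `∂_x`, `false` for multiplication by `B`. -/
noncomputable def compOp2 (B : ℝ → ℝ → ℝ) : List Bool → (ℝ → ℝ → ℝ) → ℝ → ℝ → ℝ
  | [], f => f
  | b :: L, f =>
      if b then fun x t => deriv (fun y => compOp2 B L f y t) x
      else fun x t => B x t * compOp2 B L f x t

/-- The operator `[m, n-m]`: the sum of all compositions `T₁ ∘ ⋯ ∘ Tₙ` with exactly `m`
factors `∂_x` and `n - m` factors of multiplication by `B`. -/
noncomputable def bracketOp (n m : ℕ) (B : ℝ → ℝ → ℝ) (f : ℝ → ℝ → ℝ) : ℝ → ℝ → ℝ :=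
  fun x t =>
    ∑ g ∈ Finset.univ.filter
        (fun g : Fin n → Bool => (Finset.univ.filter fun i => g i = true).card = m),
      compOp2 B (List.ofFn g) f x t



open MeasureTheory

section Aux

/-- partial x derivative of a smooth 2-var function as fderiv applied to (1,0) -/
lemma pderiv_eq {F : ℝ × ℝ → ℝ} (hF : ContDiff ℝ (⊤ : ℕ∞) F) (x t : ℝ) :
    deriv (fun y => F (y, t)) x = fderiv ℝ F (x, t) (1, 0) := by
  have h1 : HasFDerivAt F (fderiv ℝ F (x, t)) (x, t) :=
    (hF.differentiable (by simp) (x, t)).hasFDerivAt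
  have h2 : HasDerivAt (fun y : ℝ => (y, t)) ((1 : ℝ), (0 : ℝ)) x :=
    (hasDerivAt_id x).prodMk (hasDerivAt_const x t)
  exact (h1.comp_hasDerivAt x h2).deriv

lemma contDiff_pderiv {F : ℝ × ℝ → ℝ} (hF : ContDiff ℝ (⊤ : ℕ∞) F) :
    ContDiff ℝ (⊤ : ℕ∞) (fun p : ℝ × ℝ => deriv (fun y => F (y, p.2)) p.1) := by
  have : (fun p : ℝ × ℝ => deriv (fun y => F (y, p.2)) p.1)
      = fun p : ℝ × ℝ => fderiv ℝ F p ((1 : ℝ), (0 : ℝ)) := by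
    funext p
    rw [pderiv_eq hF p.1 p.2]
  rw [this]
  exact (hF.fderiv_right ((by simp))).clm_apply contDiff_const

lemma compOp2_contDiff (B : ℝ → ℝ → ℝ) (hB : ContDiff ℝ (⊤ : ℕ∞) (fun p : ℝ × ℝ => B p.1 p.2))
    (f : ℝ → ℝ → ℝ) (hf : ContDiff ℝ (⊤ : ℕ∞) (fun p : ℝ × ℝ => f p.1 p.2)) :
    ∀ L : List Bool, ContDiff ℝ (⊤ : ℕ∞) (fun p : ℝ × ℝ => compOp2 B L f p.1 p.2)
  | [] => hf
  | true :: L => by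
      have ih := compOp2_contDiff B hB f hf L
      simpa [compOp2] using contDiff_pderiv (F := fun p : ℝ × ℝ => compOp2 B L f p.1 p.2) ih
  | false :: L => by
      have ih := compOp2_contDiff B hB f hf L
      simpa [compOp2] using hB.mul ih

lemma compOp2_support (B : ℝ → ℝ → ℝ) (f : ℝ → ℝ → ℝ)
    (hfc : ∀ t, HasCompactSupport fun x => f x t) :
    ∀ (L : List Bool) (t : ℝ), HasCompactSupport fun x => compOp2 B L f x t
  | [], t => hfc t
  | true :: L, t => by
      have ih := compOp2_support B f hfc L t
      simpa [compOp2] using ih.deriv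
  | false :: L, t => by
      have ih := compOp2_support B f hfc L t
      simpa [compOp2] using (show HasCompactSupport fun x => B x t * compOp2 B L f x t from ih.mul_left (f := fun x => B x t))

lemma compOp2_append (B : ℝ → ℝ → ℝ) (f : ℝ → ℝ → ℝ) :
    ∀ L1 L2 : List Bool, compOp2 B (L1 ++ L2) f = compOp2 B L1 (compOp2 B L2 f)
  | [], L2 => rfl
  | b :: L1, L2 => by
      cases b <;> simp [compOp2, compOp2_append B f L1 L2]

end Aux
section Adj

/-- restriction to a fixed t is smooth -/
lemma slice_contDiff {F : ℝ → ℝ → ℝ} (hF : ContDiff ℝ (⊤ : ℕ∞) (fun p : ℝ × ℝ => F p.1 p.2)) (t : ℝ) :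
    ContDiff ℝ (⊤ : ℕ∞) (fun x => F x t) :=
  hF.comp (contDiff_id.prodMk contDiff_const)

lemma adj_aux (B : ℝ → ℝ → ℝ) (hB : ContDiff ℝ (⊤ : ℕ∞) (fun p : ℝ × ℝ => B p.1 p.2))
    (f : ℝ → ℝ → ℝ)
    (hf : ContDiff ℝ (⊤ : ℕ∞) (fun p : ℝ × ℝ => f p.1 p.2))
    (hfc : ∀ t, HasCompactSupport fun x => f x t) :
    ∀ (L : List Bool) (g : ℝ → ℝ → ℝ),
      ContDiff ℝ (⊤ : ℕ∞) (fun p : ℝ × ℝ => g p.1 p.2) →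
      (∀ t, HasCompactSupport fun x => g x t) → ∀ t : ℝ,
      ∫ x, compOp2 B L f x t * g x t
        = (-1 : ℝ) ^ (L.count true) * ∫ x, f x t * compOp2 B L.reverse g x t := by
  intro L
  induction L with
  | nil => intro g hg hgc t; simp [compOp2]
  | cons b L IH =>
    intro g hg hgc t
    cases b
    case false =>
      have hg' : ContDiff ℝ (⊤ : ℕ∞) (fun p : ℝ × ℝ => (fun x s => B x s * g x s) p.1 p.2) := hB.mul hg
      have hgc' : ∀ s, HasCompactSupport fun x => B x s * g x s :=
        fun s => (hgc s).mul_left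
      have ih := IH (fun x s => B x s * g x s) hg' hgc' t
      have e1 : ∀ x, compOp2 B (false :: L) f x t * g x t
          = compOp2 B L f x t * (B x t * g x t) := by
        intro x; simp [compOp2]; ring
      have e2 : compOp2 B ((false :: L).reverse) g
          = compOp2 B L.reverse (fun x s => B x s * g x s) := by
        rw [List.reverse_cons, compOp2_append]
        simp [compOp2]
      calc ∫ x, compOp2 B (false :: L) f x t * g x t
          = ∫ x, compOp2 B L f x t * (B x t * g x t) := by
            exact congrArg _ (funext e1)
        _ = (-1 : ℝ) ^ (L.count true) *
              ∫ x, f x t * compOp2 B L.reverse (fun x s => B x s * g x s) x t := ih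
        _ = (-1 : ℝ) ^ ((false :: L).count true) *
              ∫ x, f x t * compOp2 B ((false :: L).reverse) g x t := by
            rw [e2]; simp [List.count_cons]
    case true =>
      -- integration by parts
      set u : ℝ → ℝ := fun x => compOp2 B L f x t with hu_def
      have hu : ContDiff ℝ (⊤ : ℕ∞) u := slice_contDiff (compOp2_contDiff B hB f hf L) t
      have hucs : HasCompactSupport u := compOp2_support B f hfc L t
      have hv : ContDiff ℝ (⊤ : ℕ∞) (fun x => g x t) := slice_contDiff hg t
      have hIBP : ∫ x, deriv u x * g x t = - ∫ x, u x * deriv (fun y => g y t) x := by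
        have h1 : ∀ x, HasDerivAt u (deriv u x) x :=
          fun x => (hu.differentiable (by simp) x).hasDerivAt
        have h2 : ∀ x, HasDerivAt (fun y => g y t) (deriv (fun y => g y t) x) x :=
          fun x => (hv.differentiable (by simp) x).hasDerivAt
        have i1 : Integrable (u * fun x => deriv (fun y => g y t) x) :=
          ((hu.continuous.mul (hv.continuous_deriv (by simp))).integrable_of_hasCompactSupport
            (hucs.mul_right))
        have i2 : Integrable ((fun x => deriv u x) * fun x => g x t) :=
          (((hu.continuous_deriv (by simp)).mul hv.continuous).integrable_of_hasCompactSupport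
            (hucs.deriv.mul_right))
        have i3 : Integrable (u * fun x => g x t) :=
          ((hu.continuous.mul hv.continuous).integrable_of_hasCompactSupport
            (hucs.mul_right))
        have := integral_mul_deriv_eq_deriv_mul_of_integrable (fun x _ => h1 x) (fun x _ => h2 x) i1 i2 i3
        linarith [this]
      have hg' : ContDiff ℝ (⊤ : ℕ∞) (fun p : ℝ × ℝ => compOp2 B [true] g p.1 p.2) :=
        compOp2_contDiff B hB g hg [true]
      have hgc' : ∀ s, HasCompactSupport fun x => compOp2 B [true] g x s :=
        compOp2_support B g (fun s => hgc s) [true]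
      have ih := IH (compOp2 B [true] g) hg' hgc' t
      have e2 : compOp2 B ((true :: L).reverse) g = compOp2 B L.reverse (compOp2 B [true] g) := by
        rw [List.reverse_cons, compOp2_append]
      calc ∫ x, compOp2 B (true :: L) f x t * g x t
          = ∫ x, deriv u x * g x t := by simp [compOp2, hu_def]
        _ = - ∫ x, u x * deriv (fun y => g y t) x := hIBP
        _ = - ∫ x, compOp2 B L f x t * compOp2 B [true] g x t := by
            simp [compOp2, hu_def]
        _ = - ((-1 : ℝ) ^ (L.count true) *
              ∫ x, f x t * compOp2 B L.reverse (compOp2 B [true] g) x t) := by rw [ih]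
        _ = (-1 : ℝ) ^ ((true :: L).count true) *
              ∫ x, f x t * compOp2 B ((true :: L).reverse) g x t := by
            rw [e2]; simp [List.count_cons]; ring

end Adj
section Main

lemma count_ofFn : ∀ (n : ℕ) (σ : Fin n → Bool),
    (List.ofFn σ).count true = (Finset.univ.filter fun i => σ i = true).card
  | 0, σ => by simp
  | n + 1, σ => by
      rw [List.ofFn_succ, List.count_cons, count_ofFn n (fun i => σ i.succ)]
      rw [Finset.card_filter, Finset.card_filter, Fin.sum_univ_succ]
      simp [add_comm]

lemma ofFn_rev' (n : ℕ) (σ : Fin n → Bool) :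
    (List.ofFn σ).reverse = List.ofFn (fun i => σ i.rev) := by
  apply List.ext_getElem
  · simp
  · intro i h1 h2
    simp only [List.getElem_reverse, List.getElem_ofFn]
    congr 1
    simp only [List.length_ofFn] at h1 h2 ⊢
    ext
    simp [Fin.rev]
    omega

lemma card_rev (n : ℕ) (σ : Fin n → Bool) :
    (Finset.univ.filter fun i => σ (Fin.rev i) = true).card
      = (Finset.univ.filter fun i => σ i = true).card := by
  apply Finset.card_nbij' (fun i => Fin.rev i) (fun i => Fin.rev i) <;>
    simp [Finset.mem_filter, Set.MapsTo, Set.LeftInvOn, Set.RightInvOn]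

/-- The operator `[m, n-m]` is symmetric on `L²(D)`, `D = ℝ × [0,1]`, when `m` is even,
and antisymmetric when `m` is odd, for `B` affine in `x` and smooth `f, g` vanishing at
`t = 0, 1` and compactly supported in `x`. -/
theorem stmt13 (n m : ℕ) (hm : m ≤ n) (B : ℝ → ℝ → ℝ)
    (hB : ContDiff ℝ (⊤ : ℕ∞) (fun p : ℝ × ℝ => B p.1 p.2))
    (hB2 : ∀ t x, deriv (deriv fun y => B y t) x = 0)
    (f g : ℝ → ℝ → ℝ)
    (hf : ContDiff ℝ (⊤ : ℕ∞) (fun p : ℝ × ℝ => f p.1 p.2))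
    (hg : ContDiff ℝ (⊤ : ℕ∞) (fun p : ℝ × ℝ => g p.1 p.2))
    (hf0 : ∀ x, f x 0 = 0 ∧ f x 1 = 0) (hg0 : ∀ x, g x 0 = 0 ∧ g x 1 = 0)
    (hfc : ∀ t, HasCompactSupport fun x => f x t)
    (hgc : ∀ t, HasCompactSupport fun x => g x t) :
    (∫ t in Set.Icc (0 : ℝ) 1, ∫ x, bracketOp n m B f x t * g x t)
      = (if Even m then (1 : ℝ) else -1) *
          ∫ t in Set.Icc (0 : ℝ) 1, ∫ x, f x t * bracketOp n m B g x t := by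
  set S : Finset (Fin n → Bool) := Finset.univ.filter
      (fun σ : Fin n → Bool => (Finset.univ.filter fun i => σ i = true).card = m) with hS
  -- pointwise in t equality of the inner integrals
  have key : ∀ t : ℝ, ∫ x, bracketOp n m B f x t * g x t
      = (-1 : ℝ) ^ m * ∫ x, f x t * bracketOp n m B g x t := by
    intro t
    have hint : ∀ (σ : Fin n → Bool), Integrable fun x => compOp2 B (List.ofFn σ) f x t * g x t := by
      intro σ
      exact ((slice_contDiff (compOp2_contDiff B hB f hf (List.ofFn σ)) t).continuous.mul
        (slice_contDiff hg t).continuous).integrable_of_hasCompactSupport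
        ((compOp2_support B f hfc (List.ofFn σ) t).mul_right)
    have step1 : ∫ x, bracketOp n m B f x t * g x t
        = ∑ σ ∈ S, ∫ x, compOp2 B (List.ofFn σ) f x t * g x t := by
      rw [show (fun x => bracketOp n m B f x t * g x t)
          = fun x => ∑ σ ∈ S, compOp2 B (List.ofFn σ) f x t * g x t by
        funext x; rw [bracketOp, Finset.sum_mul]]
      exact integral_finset_sum S fun σ _ => hint σ
    have step2 : ∀ σ ∈ S, ∫ x, compOp2 B (List.ofFn σ) f x t * g x t
        = (-1 : ℝ) ^ m * ∫ x, f x t * compOp2 B (List.ofFn fun i => σ i.rev) g x t := by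
      intro σ hσ
      rw [adj_aux B hB f hf hfc (List.ofFn σ) g hg hgc t, ← ofFn_rev' n σ,
        count_ofFn n σ]
      rw [hS, Finset.mem_filter] at hσ
      rw [hσ.2]
    have step3 : ∑ σ ∈ S, ∫ x, f x t * compOp2 B (List.ofFn fun i => σ i.rev) g x t
        = ∑ σ ∈ S, ∫ x, f x t * compOp2 B (List.ofFn σ) g x t := by
      apply Finset.sum_nbij' (fun σ => σ ∘ Fin.rev) (fun σ => σ ∘ Fin.rev)
      · intro σ hσ
        rw [hS, Finset.mem_filter] at hσ ⊢
        exact ⟨Finset.mem_univ _, (card_rev n σ).trans hσ.2⟩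
      · intro σ hσ
        rw [hS, Finset.mem_filter] at hσ ⊢
        exact ⟨Finset.mem_univ _, (card_rev n σ).trans hσ.2⟩
      · intro σ _; funext i; simp
      · intro σ _; funext i; simp
      · intro σ _; rfl
    have hint2 : ∀ (σ : Fin n → Bool), Integrable fun x => f x t * compOp2 B (List.ofFn σ) g x t := by
      intro σ
      exact ((slice_contDiff hf t).continuous.mul
        (slice_contDiff (compOp2_contDiff B hB g hg (List.ofFn σ)) t).continuous
        ).integrable_of_hasCompactSupport ((hfc t).mul_right)
    have step4 : ∑ σ ∈ S, ∫ x, f x t * compOp2 B (List.ofFn σ) g x t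
        = ∫ x, f x t * bracketOp n m B g x t := by
      rw [show (fun x => f x t * bracketOp n m B g x t)
          = fun x => ∑ σ ∈ S, f x t * compOp2 B (List.ofFn σ) g x t by
        funext x; rw [bracketOp, Finset.mul_sum]]
      exact (integral_finset_sum S fun σ _ => hint2 σ).symm
    rw [step1, Finset.sum_congr rfl step2, ← Finset.mul_sum, step3, step4]
  have : (fun t => ∫ x, bracketOp n m B f x t * g x t)
      = fun t => (-1 : ℝ) ^ m * ∫ x, f x t * bracketOp n m B g x t := funext key
  rw [this, MeasureTheory.integral_const_mul]
  congr 1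
  rcases Nat.even_or_odd m with h | h
  · simp [h, Even.neg_one_pow h]
  · simp [Nat.not_even_iff_odd.2 h, Odd.neg_one_pow h]

end Main
end
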